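/- (Constantin–E–Titi commutator identity.) Let Ω ⊂ ℝ^d be a bounded domain and f, g ∈ L²_loc(Ω). Then for every ε > 0 and a.e. x ∈ Ω with dist(x,∂Ω) > ε: (fg)^ε(x) − f^ε(x) g^ε(x) = ∫_{B_ε(0)} [f(x−y) − f(x)][g(x−y) − g(x)] ϱ_ε(y) dy − (f(x) − f^ε(x))(g(x) − g^ε(x)). -/

import Mathlib

open MeasureTheory Metric Filter Topology
open scoped ENNReal NNReal

noncomputable section

/-- Euclidean space `ℝ^d`. -/
abbrev Euc (d : ℕ) := EuclideanSpace ℝ (Fin d)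

variable {d : ℕ} {F : Type*} [NormedAddCommGroup F] [NormedSpace ℝ F]

/-! ### Lebesgue and Besov-type norms on a domain -/

/-- The `L^q` norm of `f` on the set `Ω`. -/
def LqOn (q : ℝ≥0∞) (Ω : Set (Euc d)) (f : Euc d → F) : ℝ≥0∞ :=
  eLpNorm f q (volume.restrict Ω)

/-- `‖f(·-y) - f‖_{L^q(Ω ∩ (Ω+y))}` : the translation-difference norm entering Besov seminorms. -/
def besovDiff (q : ℝ≥0∞) (Ω : Set (Euc d)) (f : Euc d → F) (y : Euc d) : ℝ≥0∞ :=
  eLpNorm (fun x => f (x - y) - f x) q (volume.restrict (Ω ∩ ((· + y) '' Ω)))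

/-- The Besov seminorm `‖f‖_{Ḃ^α_{q,∞}(Ω)} = sup_{y ≠ 0} |y|^{-α} ‖f(·-y)-f‖_{L^q(Ω ∩ (Ω+y))}`. -/
def besovSemi (α : ℝ) (q : ℝ≥0∞) (Ω : Set (Euc d)) (f : Euc d → F) : ℝ≥0∞ :=
  ⨆ (y : Euc d) (_ : y ≠ 0), ENNReal.ofReal (‖y‖ ^ (-α)) * besovDiff q Ω f y

/-- The Besov norm `‖f‖_{B^α_{q,∞}(Ω)} = ‖f‖_{L^q(Ω)} + ‖f‖_{Ḃ^α_{q,∞}(Ω)}`. -/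
def besovNorm (α : ℝ) (q : ℝ≥0∞) (Ω : Set (Euc d)) (f : Euc d → F) : ℝ≥0∞ :=
  LqOn q Ω f + besovSemi α q Ω f

/-- Membership in `B^α_{q,∞}(Ω)`. -/
def MemBesov (α : ℝ) (q : ℝ≥0∞) (Ω : Set (Euc d)) (f : Euc d → F) : Prop :=
  MemLp f q (volume.restrict Ω) ∧ besovSemi α q Ω f < ⊤

/-- Membership in the Onsager critical space `B^α_{q,c(ℕ)}(Ω)`: finite `B^α_{q,∞}` norm together
with `lim_{|y|→0} |y|^{-α} ‖f(·-y)-f‖_{L^q(Ω ∩ (Ω+y))} = 0`. -/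
def MemOnsager (α : ℝ) (q : ℝ≥0∞) (Ω : Set (Euc d)) (f : Euc d → F) : Prop :=
  MemBesov α q Ω f ∧
  Tendsto (fun y : Euc d => ENNReal.ofReal (‖y‖ ^ (-α)) * besovDiff q Ω f y) (𝓝[≠] 0) (𝓝 0)

/-- `( ∫_{Ω'} ⨍_{B_ε(0)} |f(x) - f(x-y)|^q dy dx )^{1/q}` realised as an `L^q` norm with respect to
the product of `volume` on `Ω'` and the normalised volume on the ball `B_ε(0)`. -/
def vmoQuant (q : ℝ≥0∞) (Ω' : Set (Euc d)) (ε : ℝ) (f : Euc d → F) : ℝ≥0∞ :=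
  eLpNorm (fun z : Euc d × Euc d => f z.1 - f (z.1 - z.2)) q
    ((volume.restrict Ω').prod ((volume (ball (0 : Euc d) ε))⁻¹ • volume.restrict (ball (0 : Euc d) ε)))

/-- Membership in the Besov–VMO type space `B̲^α_{q,VMO}(Ω)`: `f ∈ L^q(Ω)` and, for every open
`Ω'` compactly contained in `Ω`, `ε^{-α} (∫_{Ω'} ⨍_{B_ε(0)} |f(x)-f(x-y)|^q dy dx)^{1/q} → 0`. -/
def MemVMO (α : ℝ) (q : ℝ≥0∞) (Ω : Set (Euc d)) (f : Euc d → F) : Prop :=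
  MemLp f q (volume.restrict Ω) ∧
  ∀ Ω' : Set (Euc d), IsOpen Ω' → closure Ω' ⊆ Ω →
    Tendsto (fun ε : ℝ => ENNReal.ofReal (ε ^ (-α)) * vmoQuant q Ω' ε f) (𝓝[>] 0) (𝓝 0)

/-- The `VMO`-type seminorm over a fixed subdomain `Ω'`. -/
def vmoSemiOn (α : ℝ) (q : ℝ≥0∞) (Ω' : Set (Euc d)) (f : Euc d → F) : ℝ≥0∞ :=
  ⨆ (ε : ℝ) (_ : 0 < ε), ENNReal.ofReal (ε ^ (-α)) * vmoQuant q Ω' ε f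

/-! ### Time-dependent (Bochner-type) membership -/

/-- The `L^p(0,T;L^q(Ω))` norm. -/
def LpLqNorm (p q : ℝ≥0∞) (T : ℝ) (Ω : Set (Euc d)) (f : ℝ → Euc d → F) : ℝ≥0∞ :=
  eLpNorm (fun t => (LqOn q Ω (f t)).toReal) p (volume.restrict (Set.Ioo 0 T))

/-- `f ∈ L^p(0,T;L^q(Ω))`. -/
def MemLpLq (p q : ℝ≥0∞) (T : ℝ) (Ω : Set (Euc d)) (f : ℝ → Euc d → F) : Prop :=
  (∀ᵐ t ∂(volume.restrict (Set.Ioo 0 T)), MemLp (f t) q (volume.restrict Ω)) ∧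
  LpLqNorm p q T Ω f < ⊤

/-- `f ∈ L^p(0,T;B^α_{q,∞}(Ω))`. -/
def MemLpBesov (p : ℝ≥0∞) (α : ℝ) (q : ℝ≥0∞) (T : ℝ) (Ω : Set (Euc d))
    (f : ℝ → Euc d → F) : Prop :=
  (∀ᵐ t ∂(volume.restrict (Set.Ioo 0 T)), MemBesov α q Ω (f t)) ∧
  eLpNorm (fun t => (besovNorm α q Ω (f t)).toReal) p (volume.restrict (Set.Ioo 0 T)) < ⊤

/-- `f ∈ L^p(0,T;B^α_{q,c(ℕ)}(Ω))`. -/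
def MemLpOnsager (p : ℝ≥0∞) (α : ℝ) (q : ℝ≥0∞) (T : ℝ) (Ω : Set (Euc d))
    (f : ℝ → Euc d → F) : Prop :=
  (∀ᵐ t ∂(volume.restrict (Set.Ioo 0 T)), MemOnsager α q Ω (f t)) ∧
  eLpNorm (fun t => (besovNorm α q Ω (f t)).toReal) p (volume.restrict (Set.Ioo 0 T)) < ⊤

/-- `f ∈ L^p(0,T;B̲^α_{q,VMO}(Ω))`. -/
def MemLpVMO (p : ℝ≥0∞) (α : ℝ) (q : ℝ≥0∞) (T : ℝ) (Ω : Set (Euc d))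
    (f : ℝ → Euc d → F) : Prop :=
  (∀ᵐ t ∂(volume.restrict (Set.Ioo 0 T)), MemVMO α q Ω (f t)) ∧
  eLpNorm (fun t => (besovNorm α q Ω (f t)).toReal) p (volume.restrict (Set.Ioo 0 T)) < ⊤

/-- `f ∈ L^p(0,T;Ḃ^β_{q,∞}(Ω))` (homogeneous Besov seminorm space). -/
def MemLpBesovDot (p : ℝ≥0∞) (β : ℝ) (q : ℝ≥0∞) (T : ℝ) (Ω : Set (Euc d))
    (f : ℝ → Euc d → F) : Prop :=
  (∀ᵐ t ∂(volume.restrict (Set.Ioo 0 T)), besovSemi β q Ω (f t) < ⊤) ∧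
  eLpNorm (fun t => (besovSemi β q Ω (f t)).toReal) p (volume.restrict (Set.Ioo 0 T)) < ⊤

/-- `f ∈ C([0,T];L^q(Ω))`: continuity in time with respect to the `L^q(Ω)` norm. -/
def ContLq (q : ℝ≥0∞) (T : ℝ) (Ω : Set (Euc d)) (f : ℝ → Euc d → F) : Prop :=
  (∀ t ∈ Set.Icc 0 T, MemLp (f t) q (volume.restrict Ω)) ∧
  ∀ t ∈ Set.Icc 0 T,
    Tendsto (fun s => eLpNorm (fun x => f s x - f t x) q (volume.restrict Ω))
      (𝓝[Set.Icc 0 T] t) (𝓝 0)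

/-! ### Mollification -/

/-- Unnormalised standard bump `e^{-1/(1-|x|²)} 1_{|x|<1}`. -/
def bumpAux (d : ℕ) (x : Euc d) : ℝ := if ‖x‖ < 1 then Real.exp (-(1 - ‖x‖ ^ 2)⁻¹) else 0

/-- Standard mollifier `ϱ`, normalised so that `∫ ϱ = 1`. -/
def stdMoll (d : ℕ) (x : Euc d) : ℝ := (∫ z : Euc d, bumpAux d z)⁻¹ * bumpAux d x

/-- Rescaled mollifier `ϱ_ε(x) = ε^{-d} ϱ(x/ε)`. -/
def stdMollScaled (ε : ℝ) (x : Euc d) : ℝ := (ε ^ d)⁻¹ * stdMoll d (ε⁻¹ • x)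

/-- Mollification `f^ε(x) = ∫_{B_ε(0)} ϱ_ε(y) f(x-y) dy`. -/
def mollify (ε : ℝ) (f : Euc d → F) (x : Euc d) : F :=
  ∫ y in ball (0 : Euc d) ε, stdMollScaled ε y • f (x - y)

/-! ### Geometry of the domain -/

/-- Distance to the boundary `∂Ω`. -/
def bdist (Ω : Set (Euc d)) (x : Euc d) : ℝ := infDist x (frontier Ω)

/-- The boundary layer `Ω_ε = {x ∈ Ω : dist(x,∂Ω) < ε}`. -/
def layer (Ω : Set (Euc d)) (ε : ℝ) : Set (Euc d) := {x ∈ Ω | bdist Ω x < ε}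

/-- The boundary shell `{x ∈ Ω : ε/2 < dist(x,∂Ω) < ε}`. -/
def shell (Ω : Set (Euc d)) (ε : ℝ) : Set (Euc d) :=
  {x ∈ Ω | ε / 2 < bdist Ω x ∧ bdist Ω x < ε}

/-- Data of a `C²` boundary: near the boundary the distance function is `C²`, and `nor x`
(the outward unit normal at the nearest boundary point `σ(x)`) is the negative gradient
of the boundary distance: `∇_x d(x,∂Ω) = -n(σ(x))`, `‖n(σ(x))‖ = 1`. -/
def C2BoundaryData (Ω : Set (Euc 3)) (ε₀ : ℝ) (nor : Euc 3 → Euc 3) : Prop :=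
  0 < ε₀ ∧
  ContDiffOn ℝ 2 (bdist Ω) (layer Ω ε₀) ∧
  ∀ x ∈ layer Ω ε₀, ‖nor x‖ = 1 ∧ HasGradientAt (bdist Ω) (-(nor x)) x

/-! ### Vector calculus in ℝ³ -/

/-- `i`-th coordinate vector of `ℝ³`. -/
def e3 (i : Fin 3) : Euc 3 := EuclideanSpace.single i 1

/-- Interpret a triple of reals as a vector of `ℝ³`. -/
def vec3 (a : Fin 3 → ℝ) : Euc 3 := (WithLp.equiv 2 (Fin 3 → ℝ)).symm a

/-- Partial derivative `∂_i f` of a scalar field. -/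
def pd3 (f : Euc 3 → ℝ) (i : Fin 3) (x : Euc 3) : ℝ := fderiv ℝ f x (e3 i)

/-- Gradient of a scalar field on `ℝ³`. -/
def grad3 (f : Euc 3 → ℝ) (x : Euc 3) : Euc 3 := vec3 fun i => pd3 f i x

/-- Divergence of a vector field on `ℝ³`. -/
def div3 (Ψ : Euc 3 → Euc 3) (x : Euc 3) : ℝ := ∑ i, pd3 (fun y => Ψ y i) i x

/-- Curl of a vector field on `ℝ³`. -/
def curl3 (Ψ : Euc 3 → Euc 3) (x : Euc 3) : Euc 3 :=
  vec3 ![pd3 (fun y => Ψ y 2) 1 x - pd3 (fun y => Ψ y 1) 2 x,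
         pd3 (fun y => Ψ y 0) 2 x - pd3 (fun y => Ψ y 2) 0 x,
         pd3 (fun y => Ψ y 1) 0 x - pd3 (fun y => Ψ y 0) 1 x]

/-- Cross product on `ℝ³`. -/
def cross3 (a b : Euc 3) : Euc 3 :=
  vec3 ![a 1 * b 2 - a 2 * b 1, a 2 * b 0 - a 0 * b 2, a 0 * b 1 - a 1 * b 0]

/-- Dot product on `ℝ³`. -/
def dot3 (a b : Euc 3) : ℝ := ∑ i, a i * b i

/-! ### Test functions and weak solutions -/

/-- Test function in `C_c^∞(Ω)`. -/
def IsTestS (Ω : Set (Euc 3)) (φ : Euc 3 → F) : Prop :=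
  ContDiff ℝ (⊤ : ℕ∞) φ ∧ HasCompactSupport φ ∧ tsupport φ ⊆ Ω

/-- Test function in `C_c^∞((0,T) × Ω)`. -/
def IsTestST (T : ℝ) (Ω : Set (Euc 3)) (Φ : ℝ → Euc 3 → F) : Prop :=
  ContDiff ℝ (⊤ : ℕ∞) (Function.uncurry Φ) ∧ HasCompactSupport (Function.uncurry Φ) ∧
  tsupport (Function.uncurry Φ) ⊆ Set.Ioo 0 T ×ˢ Ω

/-- `P(r) = ∫₁^r p'(s)/s ds`. -/
def Pfun (p : ℝ → ℝ) (r : ℝ) : ℝ := ∫ s in (1:ℝ)..r, deriv p s / s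

/-- `G(r) = r ∫₁^r p(s)/s² ds`. -/
def Gfun (p : ℝ → ℝ) (r : ℝ) : ℝ := r * ∫ s in (1:ℝ)..r, p s / s ^ 2

/-- Weak solution of the compressible Euler equations on `(0,T) × Ω`
(mass and momentum equations in the sense of distributions, energy inequality,
and regularity of the pressure law). -/
structure WeakSolCE (T : ℝ) (Ω : Set (Euc 3)) (p : ℝ → ℝ)
    (ρ : ℝ → Euc 3 → ℝ) (v : ℝ → Euc 3 → Euc 3) : Prop where
  press_cont : ContinuousOn p (Set.Ici 0)
  press_C2 : ContDiffOn ℝ 2 p (Set.Ioi 0)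
  mass : ∀ Φ : ℝ → Euc 3 → ℝ, IsTestST T Ω Φ →
    (∫ t in Set.Ioo 0 T, ∫ x in Ω,
      (ρ t x * deriv (fun s => Φ s x) t + ρ t x * dot3 (v t x) (grad3 (Φ t) x))) = 0
  momentum : ∀ Ψ : ℝ → Euc 3 → Euc 3, IsTestST T Ω Ψ →
    (∫ t in Set.Ioo 0 T, ∫ x in Ω,
      (ρ t x * dot3 (v t x) (deriv (fun s => Ψ s x) t)
        + (∑ i, ∑ j, ρ t x * v t x i * v t x j * pd3 (fun y => Ψ t y i) j x)
        + p (ρ t x) * div3 (Ψ t) x)) = 0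
  energy : ∀ t ∈ Set.Ioo 0 T,
    (∫ x in Ω, ((2:ℝ)⁻¹ * ρ t x * ‖v t x‖ ^ 2 + Gfun p (ρ t x)))
      ≤ ∫ x in Ω, ((2:ℝ)⁻¹ * ρ 0 x * ‖v 0 x‖ ^ 2 + Gfun p (ρ 0 x))

/-- Weak solution of the incompressible Euler equations on `(0,T) × Ω` with pressure `pr`. -/
structure WeakSolIE (T : ℝ) (Ω : Set (Euc 3)) (v : ℝ → Euc 3 → Euc 3)
    (pr : ℝ → Euc 3 → ℝ) : Prop where
  divfree : ∀ᵐ t ∂(volume.restrict (Set.Ioo 0 T)), ∀ φ : Euc 3 → ℝ, IsTestS Ω φ →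
    (∫ x in Ω, dot3 (v t x) (grad3 φ x)) = 0
  momentum : ∀ Ψ : ℝ → Euc 3 → Euc 3, IsTestST T Ω Ψ →
    (∫ t in Set.Ioo 0 T, ∫ x in Ω,
      (dot3 (v t x) (deriv (fun s => Ψ s x) t)
        + (∑ i, ∑ j, v t x i * v t x j * pd3 (fun y => Ψ t y i) j x)
        + pr t x * div3 (Ψ t) x)) = 0

/-- `ω = curl v` in the sense of distributions: for a.e. `t`,
`∫_Ω ω·φ = ∫_Ω v·curl φ` for all `φ ∈ C_c^∞(Ω;ℝ³)`. -/
def IsVorticity (T : ℝ) (Ω : Set (Euc 3)) (v ω : ℝ → Euc 3 → Euc 3) : Prop :=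
  ∀ᵐ t ∂(volume.restrict (Set.Ioo 0 T)), ∀ φ : Euc 3 → Euc 3, IsTestS Ω φ →
    (∫ x in Ω, dot3 (ω t x) (φ x)) = ∫ x in Ω, dot3 (v t x) (curl3 φ x)

/-- The product measure on `(0,T) × Ω`. -/
def prodTΩ (T : ℝ) (Ω : Set (Euc 3)) : Measure (ℝ × Euc 3) :=
  (volume.restrict (Set.Ioo 0 T)).prod (volume.restrict Ω)

/-- The near-vacuum integrability conditions:
`ρ⁻¹ 1_{ρ≤δ} ∈ L^{r₁}((0,T)×Ω)`, `(∂_t ρ) 1_{ρ≤δ} ∈ L^{r₂}((0,T)×Ω)`,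
`(∇ρ) 1_{ρ≤δ} ∈ L^{r₃}((0,T)×Ω)`. -/
def VacuumCond (T : ℝ) (Ω : Set (Euc 3)) (ρ : ℝ → Euc 3 → ℝ)
    (δ : ℝ) (r₁ r₂ r₃ : ℝ≥0∞) : Prop :=
  MemLp (Set.indicator {z : ℝ × Euc 3 | ρ z.1 z.2 ≤ δ} fun z => (ρ z.1 z.2)⁻¹)
    r₁ (prodTΩ T Ω) ∧
  MemLp (Set.indicator {z : ℝ × Euc 3 | ρ z.1 z.2 ≤ δ} fun z => deriv (fun s => ρ s z.2) z.1)
    r₂ (prodTΩ T Ω) ∧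
  MemLp (Set.indicator {z : ℝ × Euc 3 | ρ z.1 z.2 ≤ δ} fun z => grad3 (ρ z.1) z.2)
    r₃ (prodTΩ T Ω)

end


section AuxStmt16
open MeasureTheory Metric
variable {d : ℕ}

lemma bumpAux_nonneg (x : Euc d) : 0 ≤ bumpAux d x := by
  unfold bumpAux; split
  · positivity
  · exact le_refl 0

lemma bumpAux_le_one (x : Euc d) : bumpAux d x ≤ 1 := by
  unfold bumpAux; split
  · rename_i h
    have h1 : 0 < 1 - ‖x‖ ^ 2 := by nlinarith [norm_nonneg x]
    have : (0:ℝ) ≤ (1 - ‖x‖ ^ 2)⁻¹ := by positivity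
    calc Real.exp (-(1 - ‖x‖ ^ 2)⁻¹) ≤ Real.exp 0 := Real.exp_le_exp.2 (by linarith)
    _ = 1 := Real.exp_zero
  · exact zero_le_one

lemma bumpAux_measurable : Measurable (bumpAux d) := by
  unfold bumpAux
  exact Measurable.ite (measurableSet_lt measurable_norm measurable_const)
    (Real.measurable_exp.comp
      (((measurable_const.sub ((measurable_norm).pow_const 2)).inv).neg))
    measurable_const

lemma bumpAux_eq_indicator :
    bumpAux d = (ball (0 : Euc d) 1).indicator
      (fun x => Real.exp (-(1 - ‖x‖ ^ 2)⁻¹)) := by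
  funext x
  simp only [bumpAux, Set.indicator, mem_ball, dist_zero_right]

lemma bumpAux_integrable : Integrable (bumpAux d) := by
  rw [bumpAux_eq_indicator]
  rw [integrable_indicator_iff measurableSet_ball]
  refine Measure.integrableOn_of_bounded (M := 1) measure_ball_lt_top.ne
    ((Real.measurable_exp.comp
      (((measurable_const.sub ((measurable_norm).pow_const 2)).inv).neg)).aestronglyMeasurable) ?_
  filter_upwards [self_mem_ae_restrict measurableSet_ball] with x hx
  rw [mem_ball, dist_zero_right] at hx
  have h1 : 0 < 1 - ‖x‖ ^ 2 := by nlinarith [norm_nonneg x]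
  have h2 : (0:ℝ) ≤ (1 - ‖x‖ ^ 2)⁻¹ := by positivity
  rw [Real.norm_eq_abs, abs_of_pos (Real.exp_pos _)]
  calc Real.exp (-(1 - ‖x‖ ^ 2)⁻¹) ≤ Real.exp 0 := Real.exp_le_exp.2 (by linarith)
  _ = 1 := Real.exp_zero

lemma bumpAux_integral_pos : 0 < ∫ z : Euc d, bumpAux d z := by
  rw [bumpAux_eq_indicator, integral_indicator measurableSet_ball]
  rw [setIntegral_pos_iff_support_of_nonneg_ae]
  · have : Function.support (fun x : Euc d => Real.exp (-(1 - ‖x‖ ^ 2)⁻¹)) = Set.univ := by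
      ext x; simp [Function.mem_support, (Real.exp_pos _).ne']
    rw [this, Set.univ_inter]
    exact measure_ball_pos _ _ one_pos
  · filter_upwards with x using (Real.exp_pos _).le
  · rw [← integrable_indicator_iff measurableSet_ball, ← bumpAux_eq_indicator]
    exact bumpAux_integrable

lemma stdMollScaled_nonneg {ε : ℝ} (hε : 0 < ε) (y : Euc d) : 0 ≤ stdMollScaled ε y := by
  unfold stdMollScaled stdMoll
  exact mul_nonneg (inv_nonneg.2 (pow_nonneg hε.le d))
    (mul_nonneg (inv_nonneg.2 (bumpAux_integral_pos (d := d)).le) (bumpAux_nonneg _))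

lemma stdMollScaled_zero_of_not_mem {ε : ℝ} (hε : 0 < ε) {y : Euc d}
    (hy : y ∉ ball (0 : Euc d) ε) : stdMollScaled ε y = 0 := by
  rw [mem_ball, dist_zero_right, not_lt] at hy
  have hnorm : (1:ℝ) ≤ ‖ε⁻¹ • y‖ := by
    rw [norm_smul, Real.norm_eq_abs, abs_of_pos (inv_pos.2 hε)]
    rw [← div_eq_inv_mul, le_div_iff₀ hε, one_mul]
    exact hy
  have : bumpAux d (ε⁻¹ • y) = 0 := by
    unfold bumpAux; rw [if_neg (not_lt.2 hnorm)]
  simp [stdMollScaled, stdMoll, this]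

lemma stdMollScaled_measurable {ε : ℝ} : Measurable (stdMollScaled (d := d) ε) := by
  unfold stdMollScaled stdMoll
  exact (measurable_const.mul
    (measurable_const.mul (bumpAux_measurable.comp (measurable_id.const_smul ε⁻¹))))

lemma stdMollScaled_le {ε : ℝ} (hε : 0 < ε) (y : Euc d) :
    stdMollScaled ε y ≤ (ε ^ d)⁻¹ * (∫ z : Euc d, bumpAux d z)⁻¹ := by
  unfold stdMollScaled stdMoll
  rw [← mul_assoc]
  have hc : (0:ℝ) < (∫ z : Euc d, bumpAux d z)⁻¹ := inv_pos.2 bumpAux_integral_pos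
  have hεd : (0:ℝ) < (ε ^ d)⁻¹ := inv_pos.2 (pow_pos hε d)
  calc (ε ^ d)⁻¹ * (∫ z : Euc d, bumpAux d z)⁻¹ * bumpAux d (ε⁻¹ • y)
      ≤ (ε ^ d)⁻¹ * (∫ z : Euc d, bumpAux d z)⁻¹ * 1 :=
        mul_le_mul_of_nonneg_left (bumpAux_le_one _) (mul_nonneg hεd.le hc.le)
  _ = (ε ^ d)⁻¹ * (∫ z : Euc d, bumpAux d z)⁻¹ := mul_one _

lemma stdMollScaled_integral {ε : ℝ} (hε : 0 < ε) :
    ∫ y in ball (0 : Euc d) ε, stdMollScaled ε y = 1 := by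
  rw [setIntegral_eq_integral_of_forall_compl_eq_zero
    (fun y hy => stdMollScaled_zero_of_not_mem hε hy)]
  have hεd : (ε:ℝ) ^ d ≠ 0 := by positivity
  have hc : (∫ z : Euc d, bumpAux d z) ≠ 0 := bumpAux_integral_pos.ne'
  simp only [stdMollScaled, stdMoll, ← mul_assoc]
  rw [integral_const_mul, Measure.integral_comp_smul volume (bumpAux d) ε⁻¹]
  rw [finrank_euclideanSpace_fin, smul_eq_mul]
  rw [inv_pow, inv_inv, abs_of_pos (by positivity : (0:ℝ) < ε ^ d)]
  field_simp

end AuxStmt16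

/-- the Constantin–E–Titi commutator identity. -/
theorem stmt16 {d : ℕ} (Ω : Set (Euc d))
    (hΩo : IsOpen Ω) (hΩb : Bornology.IsBounded Ω) (hΩconn : IsConnected Ω)
    (f g : Euc d → ℝ)
    (hf : ∀ K : Set (Euc d), K ⊆ Ω → IsCompact K → MemLp f 2 (volume.restrict K))
    (hg : ∀ K : Set (Euc d), K ⊆ Ω → IsCompact K → MemLp g 2 (volume.restrict K))
    (ε : ℝ) (hε : 0 < ε) :
    ∀ᵐ x ∂(volume.restrict {x ∈ Ω | ε < bdist Ω x}),
      mollify ε (fun y => f y * g y) x - mollify ε f x * mollify ε g x =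
        (∫ y in ball (0 : Euc d) ε,
            stdMollScaled ε y * ((f (x - y) - f x) * (g (x - y) - g x)))
          - (f x - mollify ε f x) * (g x - mollify ε g x) := by
  have hmeas : MeasurableSet {x ∈ Ω | ε < bdist Ω x} := by
    have : {x ∈ Ω | ε < bdist Ω x} = Ω ∩ {x | ε < bdist Ω x} := rfl
    rw [this]
    exact hΩo.measurableSet.inter
      (measurableSet_lt measurable_const (continuous_infDist_pt _).measurable)
  filter_upwards [self_mem_ae_restrict hmeas] with x hx
  obtain ⟨hxΩ, hxd⟩ := hx
  -- the closed ball of radius ε around x is contained in Ω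
  have hsub : closedBall x ε ⊆ Ω := by
    have hfr : ∀ z ∈ closedBall x ε, z ∉ frontier Ω := by
      intro z hz hzfr
      have h1 : bdist Ω x ≤ dist x z := infDist_le_dist_of_mem hzfr
      rw [mem_closedBall, dist_comm] at hz
      exact absurd hxd (by simp only [not_lt]; linarith)
    refine (convex_closedBall x ε).isPreconnected.subset_left_of_subset_union
      hΩo isClosed_closure.isOpen_compl
      (disjoint_compl_right.mono_left subset_closure) ?_
      ⟨x, mem_closedBall_self hε.le, hxΩ⟩
    intro z hz
    by_cases hzΩ : z ∈ Ω
    · exact Or.inl hzΩ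
    · refine Or.inr fun hzc => hfr z hz ?_
      rw [frontier, hΩo.interior_eq]
      exact ⟨hzc, hzΩ⟩
  -- translate L² membership from closedBall x ε to ball 0 ε
  have hT : MeasurePreserving (fun y : Euc d => x - y) volume volume :=
    Measure.measurePreserving_sub_left volume x
  have hpre : (fun y : Euc d => x - y) ⁻¹' closedBall x ε = closedBall (0 : Euc d) ε := by
    ext y
    simp only [Set.mem_preimage, mem_closedBall, dist_eq_norm, sub_zero]
    rw [show x - y - x = -y by abel, norm_neg]
  have htrans : ∀ h : Euc d → ℝ, MemLp h 2 (volume.restrict (closedBall x ε)) →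
      MemLp (fun y => h (x - y)) 2 (volume.restrict (ball (0 : Euc d) ε)) := by
    intro h hh
    have h1 : MeasurePreserving (fun y : Euc d => x - y)
        (volume.restrict (closedBall (0 : Euc d) ε)) (volume.restrict (closedBall x ε)) := by
      have := hT.restrict_preimage (s := closedBall x ε) measurableSet_closedBall
      rwa [hpre] at this
    exact ((hh.comp_measurePreserving h1).mono_measure
      (Measure.restrict_mono ball_subset_closedBall le_rfl))
  have hF2 : MemLp (fun y => f (x - y)) 2 (volume.restrict (ball (0 : Euc d) ε)) :=
    htrans f (hf _ hsub (isCompact_closedBall x ε))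
  have hG2 : MemLp (fun y => g (x - y)) 2 (volume.restrict (ball (0 : Euc d) ε)) :=
    htrans g (hg _ hsub (isCompact_closedBall x ε))
  haveI : IsFiniteMeasure (volume.restrict (ball (0 : Euc d) ε)) :=
    ⟨by rw [Measure.restrict_apply_univ]; exact measure_ball_lt_top⟩
  -- integrabilities
  have hFG : Integrable (fun y => f (x - y) * g (x - y))
      (volume.restrict (ball (0 : Euc d) ε)) := by
    have h111 : (1 : ℝ≥0∞) / 1 = 1 / 2 + 1 / 2 := by
      rw [ENNReal.add_halves]; exact div_one 1
    have := hG2.smul (φ := fun y => f (x - y)) (r := 1) hF2 (hpqr := ⟨by rw [inv_one, ← ENNReal.inv_two_add_inv_two]⟩)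
    rw [memLp_one_iff_integrable] at this
    exact this
  have hρmeas : AEStronglyMeasurable (stdMollScaled (d := d) ε)
      (volume.restrict (ball (0 : Euc d) ε)) :=
    stdMollScaled_measurable.aestronglyMeasurable
  have hρbdd : ∃ C, ∀ y : Euc d, ‖stdMollScaled ε y‖ ≤ C := by
    refine ⟨(ε ^ d)⁻¹ * (∫ z : Euc d, bumpAux d z)⁻¹, fun y => ?_⟩
    rw [Real.norm_eq_abs, abs_of_nonneg (stdMollScaled_nonneg hε y)]
    exact stdMollScaled_le hε y
  have I1 : Integrable (fun y => stdMollScaled ε y * (f (x - y) * g (x - y)))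
      (volume.restrict (ball (0 : Euc d) ε)) := hFG.bdd_mul hρmeas (Filter.Eventually.of_forall hρbdd.choose_spec)
  have I2 : Integrable (fun y => stdMollScaled ε y * g (x - y))
      (volume.restrict (ball (0 : Euc d) ε)) :=
    (hG2.integrable one_le_two).bdd_mul hρmeas (Filter.Eventually.of_forall hρbdd.choose_spec)
  have I3 : Integrable (fun y => stdMollScaled ε y * f (x - y))
      (volume.restrict (ball (0 : Euc d) ε)) :=
    (hF2.integrable one_le_two).bdd_mul hρmeas (Filter.Eventually.of_forall hρbdd.choose_spec)
  have I4 : Integrable (fun y => stdMollScaled (d := d) ε y)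
      (volume.restrict (ball (0 : Euc d) ε)) := by
    refine Measure.integrableOn_of_bounded (M := (ε ^ d)⁻¹ * (∫ z : Euc d, bumpAux d z)⁻¹)
      measure_ball_lt_top.ne stdMollScaled_measurable.aestronglyMeasurable ?_
    filter_upwards with y
    rw [Real.norm_eq_abs, abs_of_nonneg (stdMollScaled_nonneg hε y)]
    exact stdMollScaled_le hε y
  -- main computation
  have hmass := stdMollScaled_integral (d := d) hε
  have hsplit : (∫ y in ball (0 : Euc d) ε,
        stdMollScaled ε y * ((f (x - y) - f x) * (g (x - y) - g x)))
      = (∫ y in ball (0 : Euc d) ε, stdMollScaled ε y * (f (x - y) * g (x - y)))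
        - f x * (∫ y in ball (0 : Euc d) ε, stdMollScaled ε y * g (x - y))
        - g x * (∫ y in ball (0 : Euc d) ε, stdMollScaled ε y * f (x - y))
        + f x * g x := by
    have hexp : (fun y => stdMollScaled ε y * ((f (x - y) - f x) * (g (x - y) - g x)))
        = fun y => stdMollScaled ε y * (f (x - y) * g (x - y))
          - f x * (stdMollScaled ε y * g (x - y))
          - g x * (stdMollScaled ε y * f (x - y))
          + (f x * g x) * stdMollScaled ε y := by
      funext y; ring
    have J2 : Integrable (fun y => f x * (stdMollScaled ε y * g (x - y)))
        (volume.restrict (ball (0 : Euc d) ε)) := I2.const_mul (f x)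
    have J3 : Integrable (fun y => g x * (stdMollScaled ε y * f (x - y)))
        (volume.restrict (ball (0 : Euc d) ε)) := I3.const_mul (g x)
    have J4 : Integrable (fun y => (f x * g x) * stdMollScaled ε y)
        (volume.restrict (ball (0 : Euc d) ε)) := I4.const_mul (f x * g x)
    have J12 : Integrable (fun y => stdMollScaled ε y * (f (x - y) * g (x - y))
        - f x * (stdMollScaled ε y * g (x - y)))
        (volume.restrict (ball (0 : Euc d) ε)) := I1.sub J2
    have J123 : Integrable (fun y => stdMollScaled ε y * (f (x - y) * g (x - y))
        - f x * (stdMollScaled ε y * g (x - y)) - g x * (stdMollScaled ε y * f (x - y)))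
        (volume.restrict (ball (0 : Euc d) ε)) := J12.sub J3
    rw [hexp, integral_add J123 J4, integral_sub J12 J3, integral_sub I1 J2,
      integral_const_mul, integral_const_mul, integral_const_mul, hmass, mul_one]
  simp only [mollify, smul_eq_mul] at *
  rw [hsplit]
  ring
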